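/- arXiv:2507.22432 — 4 statements merged into one kernel-verified Lean document; each statement's English description precedes it below -/
import Mathlib

section
/- In the sequent calculus LN, contraposition is derivable: if the sequent Γ₁, A, Γ₂ ⇒ B is provable, then the sequent Γ₁, ¬B, Γ₂ ⇒ ¬A is provable. -/
/-- Formulas of LN: atoms, ⊥, negation, product. The unit u is ¬⊥. -/
inductive Fml : Type
  | atom : ℕ → Fml
  | bot  : Fml
  | neg  : Fml → Fml
  | prod : Fml → Fml → Fml

/-- The unit u = ¬⊥. -/
def Fml.u : Fml := Fml.neg Fml.bot

/-- Provability in the sequent calculus LN. A sequent is a pair of a list of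
formulas (antecedent) and an optional formula (succedent, `none` = empty). -/
inductive LN : List Fml → Option Fml → Prop
  | id (A : Fml) : LN [A] (some A)
  | uL (Γ : List Fml) (A : Fml) : LN Γ (some A) → LN (Γ ++ [Fml.u]) (some A)
  | uR : LN [] (some Fml.u)
  | cut (Γ Δ : List Fml) (A B : Fml) :
      LN Δ (some B) → LN (Γ ++ [B]) (some A) → LN (Γ ++ Δ) (some A)
  | prodL (Γ : List Fml) (A B C : Fml) :
      LN (Γ ++ [A, B]) (some C) → LN (Γ ++ [Fml.prod A B]) (some C)
  | prodR (Γ Δ : List Fml) (A B : Fml) :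
      LN Γ (some A) → LN Δ (some B) → LN (Γ ++ Δ) (some (Fml.prod A B))
  | negL (Γ : List Fml) (A : Fml) :
      LN (A :: Γ) none → LN Γ (some (Fml.neg A))
  | negR (Γ : List Fml) (A : Fml) :
      LN Γ (some A) → LN (Γ ++ [Fml.neg A]) none
  | dnL (Γ : List Fml) (A B : Fml) :
      LN (Γ ++ [A]) (some B) → LN (Γ ++ [Fml.neg (Fml.neg A)]) (some B)
  | dnR (Γ : List Fml) (A : Fml) :
      LN Γ (some A) → LN Γ (some (Fml.neg (Fml.neg A)))
  | cyc (Γ : List Fml) (A : Fml) (S : Option Fml) :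
      LN (Γ ++ [A]) S → LN (A :: Γ) S

/-- Iterated cyclic exchange: rotate a block. -/
lemma LN.rot (Δ : List Fml) : ∀ (Γ : List Fml) (S : Option Fml),
    LN (Γ ++ Δ) S → LN (Δ ++ Γ) S := by
  induction Δ using List.reverseRecOn with
  | nil => intro Γ S h; simpa using h
  | append_singleton Δ' x ih =>
    intro Γ S h
    have h1 : LN (x :: (Γ ++ Δ')) S := by
      apply LN.cyc
      simpa [List.append_assoc] using h
    have h2 := ih (x :: Γ) S (by simpa using h1)
    simpa [List.append_assoc] using h2

/-- Contraposition is derivable in LN: if Γ₁, A, Γ₂ ⇒ B is provable,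
then Γ₁, ¬B, Γ₂ ⇒ ¬A is provable. -/
theorem LN.contraposition (Γ₁ Γ₂ : List Fml) (A B : Fml)
    (h : LN (Γ₁ ++ [A] ++ Γ₂) (some B)) :
    LN (Γ₁ ++ [Fml.neg B] ++ Γ₂) (some (Fml.neg A)) := by
  have h1 : LN (Γ₂ ++ Γ₁ ++ [A]) (some B) := by
    have := LN.rot Γ₂ (Γ₁ ++ [A]) (some B) h
    simpa [List.append_assoc] using this
  have h2 : LN ((Γ₂ ++ Γ₁) ++ [A, Fml.neg B]) none := by
    have := LN.negR _ B h1
    simpa [List.append_assoc] using this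
  have h3 : LN (A :: (Fml.neg B :: (Γ₂ ++ Γ₁))) none := by
    have := LN.rot [A, Fml.neg B] (Γ₂ ++ Γ₁) none h2
    simpa using this
  have h4 : LN (([Fml.neg B] ++ Γ₂) ++ Γ₁) (some (Fml.neg A)) := by
    have := LN.negL _ A h3
    simpa [List.append_assoc] using this
  have := LN.rot Γ₁ ([Fml.neg B] ++ Γ₂) (some (Fml.neg A)) h4
  simpa [List.append_assoc] using this
end

section
/- LN is consistent: the empty sequent (with empty antecedent and empty succedent) is not provable; equivalently, there is no formula A such that both ⇒ A and ⇒ ¬A are provable. -/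
/-- An integer-valued invariant on formulas. -/
def Fml.val : Fml → ℤ
  | Fml.atom _ => 0
  | Fml.bot => 1
  | Fml.neg A => 1 - A.val
  | Fml.prod A B => A.val + B.val

/-- Value of a succedent: the empty succedent counts as 1. -/
def sval : Option Fml → ℤ
  | none => 1
  | some A => A.val

/-- Soundness of the invariant: in any provable sequent, the sum of the values
of the antecedent equals the value of the succedent. -/
theorem LN.val_sound {Γ : List Fml} {S : Option Fml} (h : LN Γ S) :
    (Γ.map Fml.val).sum = sval S := by
  induction h with
  | id A => simp [sval]
  | uL Γ A _ ih => simp [sval, Fml.u, Fml.val] at *; omega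
  | uR => simp [sval, Fml.u, Fml.val]
  | cut Γ Δ A B _ _ ih1 ih2 => simp [sval] at *; omega
  | prodL Γ A B C _ ih => simp [sval, Fml.val] at *; omega
  | prodR Γ Δ A B _ _ ih1 ih2 => simp [sval, Fml.val] at *; omega
  | negL Γ A _ ih => simp [sval, Fml.val] at *; omega
  | negR Γ A _ ih => simp [sval, Fml.val] at *; omega
  | dnL Γ A B _ ih => simp [sval, Fml.val] at *; omega
  | dnR Γ A _ ih => simp [sval, Fml.val] at *; omega
  | cyc Γ A S _ ih => simp [sval] at *; omega

/-- LN is consistent: the empty sequent is not provable; equivalently, there is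
no formula A such that both ⇒ A and ⇒ ¬A are provable. -/
theorem LN.consistent :
    ¬ LN [] none ∧ ¬ ∃ A : Fml, LN [] (some A) ∧ LN [] (some (Fml.neg A)) := by
  constructor
  · intro h
    have := h.val_sound
    simp [sval] at this
  · rintro ⟨A, h1, h2⟩
    have e1 := h1.val_sound
    have e2 := h2.val_sound
    simp [sval, Fml.val] at e1 e2
    omega
end

section
/- Every admissible set in an abstract argumentation framework is contained in a complete extension, where the defense operator is monotone. -/
/-- The characteristic (defense) function of an argumentation framework. -/
def charF {A : Type*} (D : A → A → Prop) (S : Set A) : Set A :=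
  {a | ∀ b, D b a → ∃ c ∈ S, D c b}

def ConflictFree {A : Type*} (D : A → A → Prop) (E : Set A) : Prop :=
  ∀ a ∈ E, ∀ b ∈ E, ¬ D a b

def Admissible {A : Type*} (D : A → A → Prop) (S : Set A) : Prop :=
  ConflictFree D S ∧ S ⊆ charF D S

def Complete {A : Type*} (D : A → A → Prop) (S : Set A) : Prop :=
  ConflictFree D S ∧ S = charF D S

lemma charF_mono {A : Type*} (D : A → A → Prop) {S T : Set A} (h : S ⊆ T) :
    charF D S ⊆ charF D T := by
  intro a ha b hb
  obtain ⟨c, hc, hcb⟩ := ha b hb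
  exact ⟨c, h hc, hcb⟩

/-- Dung's fundamental lemma. -/
lemma fundamental {A : Type*} (D : A → A → Prop) {T : Set A} (hT : Admissible D T)
    {a : A} (ha : a ∈ charF D T) : Admissible D (insert a T) := by
  obtain ⟨hcf, hdef⟩ := hT
  constructor
  · rintro x hx y hy hxy
    rcases hx with rfl | hx <;> rcases hy with rfl | hy
    · obtain ⟨c, hc, hca⟩ := ha _ hxy
      obtain ⟨d, hd, hdc⟩ := ha c hca
      exact hcf d hd c hc hdc
    · obtain ⟨c, hc, hca⟩ := hdef hy _ hxy
      obtain ⟨d, hd, hdc⟩ := ha c hca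
      exact hcf d hd c hc hdc
    · obtain ⟨c, hc, hcx⟩ := ha _ hxy
      exact hcf c hc _ hx hcx
    · exact hcf x hx y hy hxy
  · rintro x hx
    rcases hx with rfl | hx
    · exact charF_mono D (Set.subset_insert _ T) ha
    · exact charF_mono D (Set.subset_insert a T) (hdef hx)

/-- The defense operator is monotone, and every admissible set is contained
in a complete extension. -/
theorem admissible_subset_complete {A : Type*} (D : A → A → Prop) :
    (∀ S T : Set A, S ⊆ T → charF D S ⊆ charF D T) ∧
    (∀ S : Set A, Admissible D S → ∃ T : Set A, Complete D T ∧ S ⊆ T) := by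
  refine ⟨fun S T h => charF_mono D h, fun S hS => ?_⟩
  obtain ⟨T, hST, hmax⟩ :=
    zorn_subset_nonempty {T : Set A | Admissible D T ∧ S ⊆ T}
      (fun c hc hchain ⟨E, hE⟩ => by
        refine ⟨⋃₀ c, ⟨⟨?_, ?_⟩, (hc hE).2.trans (Set.subset_sUnion_of_mem hE)⟩,
          fun U hU => Set.subset_sUnion_of_mem hU⟩
        · rintro x ⟨U, hU, hxU⟩ y ⟨V, hV, hyV⟩ hxy
          rcases hchain.total hU hV with h | h
          · exact (hc hV).1.1 x (h hxU) y hyV hxy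
          · exact (hc hU).1.1 x hxU y (h hyV) hxy
        · rintro x ⟨U, hU, hxU⟩
          exact charF_mono D (Set.subset_sUnion_of_mem hU) ((hc hU).1.2 hxU))
      S ⟨hS, subset_rfl⟩
  obtain ⟨hTadm, hST'⟩ := hmax.1
  refine ⟨T, ⟨hTadm.1, subset_antisymm hTadm.2 fun a ha => ?_⟩, hST⟩
  exact hmax.2 ⟨fundamental D hTadm ha, hST'.trans (Set.subset_insert a T)⟩
    (Set.subset_insert a T) (Set.mem_insert a T)
end

section
/- The grounded extension (least fixed point of the defense operator) of a finitary argumentation framework is conflict-free. -/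
lemma charF_mono_s15 {A : Type*} (D : A → A → Prop) : Monotone (charF D) := by
  intro S T hST a ha b hba
  obtain ⟨c, hcS, hcb⟩ := ha b hba
  exact ⟨c, hST hcS, hcb⟩

/-- The grounded extension (the least fixed point of the defense operator)
of a finitary argumentation framework is conflict-free. -/
theorem grounded_conflict_free {A : Type*} (D : A → A → Prop)
    (hfin : ∀ a : A, {b | D b a}.Finite)
    (G : Set A)
    (hfix : charF D G = G)
    (hleast : ∀ S : Set A, charF D S = S → G ⊆ S) :
    ConflictFree D G := by
  -- S : elements of G not attacked by G
  set S : Set A := {a | a ∈ G ∧ ∀ b ∈ G, ¬ D b a} with hS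
  have hSG : S ⊆ G := fun a ha => ha.1
  -- S is a prefixed point of charF D
  have hpre : charF D S ⊆ S := by
    intro a ha
    have haG : a ∈ G := by
      rw [← hfix]
      exact charF_mono_s15 D hSG ha
    refine ⟨haG, ?_⟩
    intro b hbG hba
    obtain ⟨c, hcS, hcb⟩ := ha b hba
    -- b ∈ G = charF D G, c attacks b, so G attacks c
    have hb' : b ∈ charF D G := by rw [hfix]; exact hbG
    obtain ⟨d, hdG, hdc⟩ := hb' c hcb
    exact hcS.2 d hdG hdc
  -- build a genuine fixed point below S via Knaster–Tarski
  let f : Set A →o Set A :=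
    ⟨fun T => charF D T ∩ S, fun T₁ T₂ h =>
      Set.inter_subset_inter_left S (charF_mono_s15 D h)⟩
  set T0 : Set A := OrderHom.lfp f with hT0def
  have hT0 : charF D T0 ∩ S = T0 := OrderHom.map_lfp f
  have hT0S : T0 ⊆ S := by rw [← hT0]; exact Set.inter_subset_right
  have hsub : charF D T0 ⊆ S := (charF_mono_s15 D hT0S).trans hpre
  have hfixT0 : charF D T0 = T0 :=
    (Set.inter_eq_left.mpr hsub).symm.trans hT0
  have hGS : G ⊆ S := (hleast T0 hfixT0).trans hT0S
  intro a haG b hbG hab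
  exact (hGS hbG).2 a haG hab
end
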